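/- arXiv:1110.6913 — 2 statements merged into one kernel-verified Lean document; each statement's English description precedes it below -/
import Mathlib

section
/- If J_e > 𝒮_e then 𝒢(J) = 𝒢_{+e}, and if J_e < -𝒮_e then 𝒢(J) = 𝒢_{-e}. -/
open scoped BigOperators

noncomputable def spin (b : Bool) : ℝ := if b then 1 else -1

noncomputable def boundaryEnergy {V : Type*} [DecidableEq V] (G : SimpleGraph V)
    [G.LocallyFinite] (J : V → V → ℝ) (σ : V → Bool) (A : Finset V) : ℝ :=
  ∑ x ∈ A, ∑ y ∈ (G.neighborFinset x).filter (fun y => y ∉ A),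
    J x y * spin (σ x) * spin (σ y)

def IsGroundState {V : Type*} [DecidableEq V] (G : SimpleGraph V) [G.LocallyFinite]
    (J : V → V → ℝ) (σ : V → Bool) : Prop :=
  ∀ A : Finset V, 0 ≤ boundaryEnergy G J σ A

def IsGroundStateOff {V : Type*} [DecidableEq V] (G : SimpleGraph V) [G.LocallyFinite]
    (J : V → V → ℝ) (σ : V → Bool) (u v : V) : Prop :=
  ∀ A : Finset V, (u ∈ A ↔ v ∈ A) → 0 ≤ boundaryEnergy G J σ A

noncomputable def superSatValue {V : Type*} [DecidableEq V] (G : SimpleGraph V)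
    [G.LocallyFinite] (J : V → V → ℝ) (u v : V) : ℝ :=
  min (∑ z ∈ (G.neighborFinset u).erase v, |J u z|)
      (∑ z ∈ (G.neighborFinset v).erase u, |J v z|)

lemma spin_abs (b : Bool) : |spin b| = 1 := by
  cases b <;> simp [spin]

lemma term_abs {V : Type*} (J : V → V → ℝ) (σ : V → Bool) (x y : V) :
    |J x y * spin (σ x) * spin (σ y)| = |J x y| := by
  rw [abs_mul, abs_mul, spin_abs, spin_abs]; ring

lemma boundaryEnergy_insert {V : Type*} [DecidableEq V] (G : SimpleGraph V)
    [G.LocallyFinite] (J : V → V → ℝ) (hJsymm : ∀ x y, J x y = J y x)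
    (σ : V → Bool) (A : Finset V) (w : V) (hw : w ∉ A) :
    boundaryEnergy G J σ (insert w A) =
      boundaryEnergy G J σ A
      + ∑ y ∈ (G.neighborFinset w).filter (fun y => y ∉ insert w A),
          J w y * spin (σ w) * spin (σ y)
      - ∑ z ∈ (G.neighborFinset w).filter (fun z => z ∈ A),
          J w z * spin (σ w) * spin (σ z) := by
  classical
  unfold boundaryEnergy
  rw [Finset.sum_insert hw]
  have h1 : ∀ x ∈ A,
      (∑ y ∈ (G.neighborFinset x).filter (fun y => y ∉ insert w A),
          J x y * spin (σ x) * spin (σ y))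
        = (∑ y ∈ (G.neighborFinset x).filter (fun y => y ∉ A),
            J x y * spin (σ x) * spin (σ y))
          - (if x ∈ (G.neighborFinset w).filter (fun z => z ∈ A)
              then J w x * spin (σ w) * spin (σ x) else 0) := by
    intro x hx
    have hset : (G.neighborFinset x).filter (fun y => y ∉ insert w A)
        = ((G.neighborFinset x).filter (fun y => y ∉ A)).erase w := by
      ext y
      simp only [Finset.mem_filter, Finset.mem_erase, Finset.mem_insert, not_or]
      tauto
    rw [hset]
    by_cases hwx : w ∈ (G.neighborFinset x).filter (fun y => y ∉ A)
    · rw [Finset.sum_erase_eq_sub hwx]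
      have hadj : x ∈ (G.neighborFinset w).filter (fun z => z ∈ A) := by
        simp only [Finset.mem_filter, SimpleGraph.mem_neighborFinset] at hwx ⊢
        exact ⟨hwx.1.symm, hx⟩
      rw [if_pos hadj, hJsymm x w]
      ring
    · rw [Finset.erase_eq_of_notMem hwx]
      have : x ∉ (G.neighborFinset w).filter (fun z => z ∈ A) := by
        simp only [Finset.mem_filter, SimpleGraph.mem_neighborFinset] at hwx ⊢
        intro ⟨h1, h2⟩
        exact hwx ⟨h1.symm, hw⟩
      rw [if_neg this]
      ring
  rw [Finset.sum_congr rfl h1, Finset.sum_sub_distrib, Finset.sum_ite_mem]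
  have : A ∩ (G.neighborFinset w).filter (fun z => z ∈ A)
      = (G.neighborFinset w).filter (fun z => z ∈ A) := by
    apply Finset.inter_eq_right.mpr
    intro z hz
    exact (Finset.mem_filter.mp hz).2
  rw [this]
  ring

/-- Difference of two sums of terms over disjoint subsets of `(N a).erase b`
is at least `-Σ_a`. -/
lemma sums_bound {V : Type*} [DecidableEq V] (G : SimpleGraph V) [G.LocallyFinite]
    (J : V → V → ℝ) (σ : V → Bool) (a b : V) (S1 S2 : Finset V)
    (h1 : S1 ⊆ (G.neighborFinset a).erase b)
    (h2 : S2 ⊆ (G.neighborFinset a).erase b)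
    (hd : Disjoint S1 S2) :
    -(∑ z ∈ (G.neighborFinset a).erase b, |J a z|) ≤
      (∑ y ∈ S1, J a y * spin (σ a) * spin (σ y))
        - ∑ z ∈ S2, J a z * spin (σ a) * spin (σ z) := by
  classical
  set t : V → ℝ := fun y => J a y * spin (σ a) * spin (σ y) with ht
  have habs : |∑ y ∈ S1, t y - ∑ z ∈ S2, t z| ≤ ∑ y ∈ S1, |t y| + ∑ z ∈ S2, |t z| :=
    (abs_sub _ _).trans (add_le_add (Finset.abs_sum_le_sum_abs _ _)
      (Finset.abs_sum_le_sum_abs _ _))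
  have hunion : ∑ y ∈ S1, |t y| + ∑ z ∈ S2, |t z| = ∑ y ∈ S1 ∪ S2, |t y| :=
    (Finset.sum_union hd).symm
  have hsub : ∑ y ∈ S1 ∪ S2, |t y| ≤ ∑ z ∈ (G.neighborFinset a).erase b, |t z| :=
    Finset.sum_le_sum_of_subset_of_nonneg (Finset.union_subset h1 h2)
      (fun i _ _ => abs_nonneg _)
  have hteq : ∑ z ∈ (G.neighborFinset a).erase b, |t z|
      = ∑ z ∈ (G.neighborFinset a).erase b, |J a z| :=
    Finset.sum_congr rfl (fun z _ => term_abs J σ a z)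
  have := neg_abs_le (∑ y ∈ S1, t y - ∑ z ∈ S2, t z)
  linarith

lemma key_bound {V : Type*} [DecidableEq V] (G : SimpleGraph V) [G.LocallyFinite]
    (J : V → V → ℝ) (hJsymm : ∀ x y, J x y = J y x) (σ : V → Bool)
    (a b : V) (hab : G.Adj a b) (A : Finset V) (ha : a ∈ A) (hb : b ∉ A)
    (h1 : 0 ≤ boundaryEnergy G J σ (insert b A))
    (h2 : 0 ≤ boundaryEnergy G J σ (A.erase a)) :
    J a b * spin (σ a) * spin (σ b) - superSatValue G J a b
      ≤ boundaryEnergy G J σ A := by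
  classical
  set t : V → V → ℝ := fun x y => J x y * spin (σ x) * spin (σ y) with ht
  -- Bound via removing a
  have bnd1 : t a b - (∑ z ∈ (G.neighborFinset a).erase b, |J a z|)
      ≤ boundaryEnergy G J σ A := by
    have hB : a ∉ A.erase a := Finset.notMem_erase a A
    have hdec := boundaryEnergy_insert G J hJsymm σ (A.erase a) a hB
    rw [Finset.insert_erase ha] at hdec
    have hbmem : b ∈ (G.neighborFinset a).filter (fun y => y ∉ A) := by
      simp [SimpleGraph.mem_neighborFinset, hab, hb]
    have hsplit : (∑ y ∈ (G.neighborFinset a).filter (fun y => y ∉ A), t a y)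
        = t a b + ∑ y ∈ ((G.neighborFinset a).filter (fun y => y ∉ A)).erase b, t a y :=
      (Finset.add_sum_erase _ _ hbmem).symm
    have hS1 : ((G.neighborFinset a).filter (fun y => y ∉ A)).erase b
        ⊆ (G.neighborFinset a).erase b := by
      intro y hy
      simp only [Finset.mem_erase, Finset.mem_filter] at hy ⊢
      exact ⟨hy.1, hy.2.1⟩
    have hS2 : (G.neighborFinset a).filter (fun z => z ∈ A.erase a)
        ⊆ (G.neighborFinset a).erase b := by
      intro z hz
      simp only [Finset.mem_filter, Finset.mem_erase] at hz ⊢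
      refine ⟨fun hzb => hb (hzb ▸ hz.2.2), hz.1⟩
    have hdisj : Disjoint (((G.neighborFinset a).filter (fun y => y ∉ A)).erase b)
        ((G.neighborFinset a).filter (fun z => z ∈ A.erase a)) := by
      rw [Finset.disjoint_left]
      intro y hy hy'
      simp only [Finset.mem_erase, Finset.mem_filter] at hy hy'
      exact hy.2.2 hy'.2.2
    have := sums_bound G J σ a b _ _ hS1 hS2 hdisj
    simp only [← ht] at hdec hsplit this ⊢
    linarith
  -- Bound via inserting b
  have bnd2 : t a b - (∑ z ∈ (G.neighborFinset b).erase a, |J b z|)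
      ≤ boundaryEnergy G J σ A := by
    have hdec := boundaryEnergy_insert G J hJsymm σ A b hb
    have hamem : a ∈ (G.neighborFinset b).filter (fun z => z ∈ A) := by
      simp [SimpleGraph.mem_neighborFinset, hab.symm, ha]
    have hsplit : (∑ z ∈ (G.neighborFinset b).filter (fun z => z ∈ A), t b z)
        = t b a + ∑ z ∈ ((G.neighborFinset b).filter (fun z => z ∈ A)).erase a, t b z :=
      (Finset.add_sum_erase _ _ hamem).symm
    have hS1 : ((G.neighborFinset b).filter (fun z => z ∈ A)).erase a
        ⊆ (G.neighborFinset b).erase a := by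
      intro y hy
      simp only [Finset.mem_erase, Finset.mem_filter] at hy ⊢
      exact ⟨hy.1, hy.2.1⟩
    have hS2 : (G.neighborFinset b).filter (fun y => y ∉ insert b A)
        ⊆ (G.neighborFinset b).erase a := by
      intro y hy
      simp only [Finset.mem_filter, Finset.mem_erase, Finset.mem_insert, not_or] at hy ⊢
      refine ⟨fun hya => hy.2.2 (hya ▸ ha), hy.1⟩
    have hdisj : Disjoint (((G.neighborFinset b).filter (fun z => z ∈ A)).erase a)
        ((G.neighborFinset b).filter (fun y => y ∉ insert b A)) := by
      rw [Finset.disjoint_left]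
      intro y hy hy'
      simp only [Finset.mem_erase, Finset.mem_filter, Finset.mem_insert, not_or] at hy hy'
      exact hy'.2.2 hy.2.2
    have hsb := sums_bound G J σ b a _ _ hS1 hS2 hdisj
    have htba : t b a = t a b := by
      simp only [ht]; rw [hJsymm b a]; ring
    simp only [← ht] at hdec hsplit hsb ⊢
    linarith
  have : t a b - superSatValue G J a b ≤ boundaryEnergy G J σ A := by
    unfold superSatValue
    rcases min_cases (∑ z ∈ (G.neighborFinset a).erase b, |J a z|)
      (∑ z ∈ (G.neighborFinset b).erase a, |J b z|) with ⟨heq, _⟩ | ⟨heq, _⟩ <;>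
      rw [heq]
    · exact bnd1
    · exact bnd2
  exact this

lemma single_bound {V : Type*} [DecidableEq V] (G : SimpleGraph V) [G.LocallyFinite]
    (J : V → V → ℝ) (σ : V → Bool) (a b : V) (hab : G.Adj a b)
    (h : 0 ≤ boundaryEnergy G J σ {a}) :
    -(∑ z ∈ (G.neighborFinset a).erase b, |J a z|) ≤ J a b * spin (σ a) * spin (σ b) := by
  classical
  have hE : boundaryEnergy G J σ {a}
      = ∑ y ∈ G.neighborFinset a, J a y * spin (σ a) * spin (σ y) := by
    unfold boundaryEnergy
    rw [Finset.sum_singleton]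
    congr 1
    ext y
    simp only [Finset.mem_filter, Finset.mem_singleton, SimpleGraph.mem_neighborFinset]
    constructor
    · exact fun h => h.1
    · intro h
      exact ⟨h, fun hy => (G.ne_of_adj h) (by rw [hy])⟩
  have hbmem : b ∈ G.neighborFinset a := (SimpleGraph.mem_neighborFinset G a b).mpr hab
  have hsplit : (∑ y ∈ G.neighborFinset a, J a y * spin (σ a) * spin (σ y))
      = J a b * spin (σ a) * spin (σ b)
        + ∑ y ∈ (G.neighborFinset a).erase b, J a y * spin (σ a) * spin (σ y) :=
    (Finset.add_sum_erase _ _ hbmem).symm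
  have habs : ∑ y ∈ (G.neighborFinset a).erase b, J a y * spin (σ a) * spin (σ y)
      ≤ ∑ z ∈ (G.neighborFinset a).erase b, |J a z| := by
    apply Finset.sum_le_sum
    intro z _
    rw [← term_abs J σ a z]
    exact le_abs_self _
  linarith

/-- If `J_e > 𝒮_e` then `𝒢(J) = 𝒢_{+e}`, and if `J_e < -𝒮_e` then `𝒢(J) = 𝒢_{-e}`. -/
theorem groundStates_eq_of_superSatisfied {V : Type*} [DecidableEq V] (G : SimpleGraph V)
    [G.LocallyFinite] (u v : V) (huv : G.Adj u v) (J : V → V → ℝ)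
    (hJsymm : ∀ x y, J x y = J y x) :
    (J u v > superSatValue G J u v →
      {σ : V → Bool | IsGroundState G J σ} =
        {σ : V → Bool | IsGroundStateOff G J σ u v ∧ spin (σ u) * spin (σ v) = 1}) ∧
    (J u v < -superSatValue G J u v →
      {σ : V → Bool | IsGroundState G J σ} =
        {σ : V → Bool | IsGroundStateOff G J σ u v ∧ spin (σ u) * spin (σ v) = -1}) := by
  classical
  have hspin : ∀ σ : V → Bool, spin (σ u) * spin (σ v) = 1 ∨ spin (σ u) * spin (σ v) = -1 := by
    intro σ; cases σ u <;> cases σ v <;> simp [spin]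
  have tsymm : ∀ σ : V → Bool,
      J v u * spin (σ v) * spin (σ u) = J u v * spin (σ u) * spin (σ v) := by
    intro σ; rw [hJsymm v u]; ring
  have hminsymm : superSatValue G J v u = superSatValue G J u v := by
    unfold superSatValue; exact min_comm _ _
  -- ground states satisfy the lower bound for the edge term
  have hlow : ∀ σ : V → Bool, IsGroundState G J σ →
      -(superSatValue G J u v) ≤ J u v * spin (σ u) * spin (σ v) := by
    intro σ h
    have h1 := single_bound G J σ u v huv (h {u})
    have h2 := single_bound G J σ v u huv.symm (h {v})
    rw [tsymm σ] at h2
    unfold superSatValue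
    rw [neg_le]
    exact le_min (by rw [← neg_le]; exact h1) (by rw [← neg_le]; exact h2)
  -- off-edge ground states with a large edge term are ground states
  have main : ∀ σ : V → Bool, IsGroundStateOff G J σ u v →
      superSatValue G J u v < J u v * spin (σ u) * spin (σ v) →
      IsGroundState G J σ := by
    intro σ hoff hlt A
    by_cases hu : u ∈ A <;> by_cases hv : v ∈ A
    · exact hoff A (by tauto)
    · have h1 : 0 ≤ boundaryEnergy G J σ (insert v A) := hoff _ (by simp [hu])
      have h2 : 0 ≤ boundaryEnergy G J σ (A.erase u) :=
        hoff _ (by simp [Finset.mem_erase, hv])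
      have hk := key_bound G J hJsymm σ u v huv A hu hv h1 h2
      linarith
    · have h1 : 0 ≤ boundaryEnergy G J σ (insert u A) := hoff _ (by simp [hv])
      have h2 : 0 ≤ boundaryEnergy G J σ (A.erase v) :=
        hoff _ (by simp [Finset.mem_erase, hu])
      have hk := key_bound G J hJsymm σ v u huv.symm A hv hu h1 h2
      rw [tsymm σ, hminsymm] at hk
      linarith
    · exact hoff A (by tauto)
  constructor
  · intro hgt
    ext σ
    simp only [Set.mem_setOf_eq]
    constructor
    · intro hgs
      refine ⟨fun A _ => hgs A, ?_⟩
      rcases hspin σ with h | h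
      · exact h
      · exfalso
        have hl := hlow σ hgs
        have : J u v * spin (σ u) * spin (σ v) = -(J u v) := by
          rw [mul_assoc, h]; ring
        linarith
    · rintro ⟨hoff, h⟩
      apply main σ hoff
      have : J u v * spin (σ u) * spin (σ v) = J u v := by
        rw [mul_assoc, h]; ring
      linarith
  · intro hlt
    ext σ
    simp only [Set.mem_setOf_eq]
    constructor
    · intro hgs
      refine ⟨fun A _ => hgs A, ?_⟩
      rcases hspin σ with h | h
      · exfalso
        have hl := hlow σ hgs
        have : J u v * spin (σ u) * spin (σ v) = J u v := by
          rw [mul_assoc, h]; ring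
        linarith
      · exact h
    · rintro ⟨hoff, h⟩
      apply main σ hoff
      have : J u v * spin (σ u) * spin (σ v) = -(J u v) := by
        rw [mul_assoc, h]; ring
      linarith
end

section
/- Let c < d be reals, e an edge, and A ⊆ {(J,σ) : σ ∈ 𝒢(J), σ_e = +1} a measurable event such that whenever (J,σ) ∈ A and J_e ≥ c, then (J(e,y),σ) ∈ A for all y ≥ c. Then M(A ∩ {J_e ∈ [c,d]}) ≥ ν([c,d]) · M(A ∩ {J_e ≥ c}), where M = ν(dJ) μ_J with μ_J the uniform measure on the finite set 𝒢(J). -/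
open scoped BigOperators ENNReal
open MeasureTheory

noncomputable def updateCoupling {V : Type*} [DecidableEq V] (J : V → V → ℝ) (u v : V)
    (y : ℝ) : V → V → ℝ :=
  fun x z => if s(x, z) = s(u, v) then y else J x z

/-- The uniform probability measure on the (finite) set of ground states. -/
noncomputable def uniformGS {V : Type*} [DecidableEq V] (G : SimpleGraph V)
    [G.LocallyFinite] (J : V → V → ℝ) : Measure (V → Bool) :=
  (({σ : V → Bool | IsGroundState G J σ}.ncard : ℝ≥0∞))⁻¹ •
    (Measure.count.restrict {σ : V → Bool | IsGroundState G J σ})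

/-!
Resample the coupling at `e` independently from `ν_e`; this leaves `ν` invariant. Take `J` with
`J_e ∈ [c, d]` and a resampled value `y ≥ c`. Stability of `A`, applied at `J(e,y)` with the
value `J_e`, gives `A_{J(e,y)} ⊆ A_J` for the sections `A_J = {σ : (J, σ) ∈ A}`, and the
ground-state counts at `J` and `J(e,y)` agree almost surely, so
`μ_{J(e,y)}(A_{J(e,y)}) ≤ μ_J(A_J)`. The integrand averaged over the resampled value does not
depend on `J_e`, so restricting it to `{J_e ∈ [c, d]}` costs exactly the factor `ν_e([c, d])`.
The integrand need not be measurable: it suffices to argue for a measurable minorant with the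
same lower integral.
-/

section Resampling

variable {Ω β : Type*} [MeasurableSpace Ω] [MeasurableSpace β] {ν : Measure Ω} {ρ : Measure β}
  {R : Ω → β → Ω}

theorem lintegral_lintegral_resample [SFinite ρ]
    (hR : MeasurePreserving (fun p : Ω × β => R p.1 p.2) (ν.prod ρ) ν)
    {φ : Ω → ℝ≥0∞} (hφ : Measurable φ) :
    ∫⁻ ω, ∫⁻ y, φ (R ω y) ∂ρ ∂ν = ∫⁻ ω, φ ω ∂ν := by
  rw [← hR.lintegral_comp hφ,
    lintegral_prod (fun p => φ (R p.1 p.2)) (hφ.comp hR.measurable).aemeasurable]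

theorem measure_mul_lintegral_eq_setLIntegral_of_resample [SFinite ρ]
    (hR : MeasurePreserving (fun p : Ω × β => R p.1 p.2) (ν.prod ρ) ν)
    {T : Set Ω} (hT : MeasurableSet T) {I : Set β} (hI : MeasurableSet I)
    (hRT : ∀ ω y, R ω y ∈ T ↔ y ∈ I)
    {ψ : Ω → ℝ≥0∞} (hψ : Measurable ψ) (hψR : ∀ ω y, ψ (R ω y) = ψ ω) :
    ρ I * ∫⁻ ω, ψ ω ∂ν = ∫⁻ ω in T, ψ ω ∂ν := by
  have hsection : ∀ ω, (fun y => T.indicator ψ (R ω y)) = I.indicator fun _ => ψ ω := by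
    intro ω
    ext y
    by_cases hy : y ∈ I
    · rw [Set.indicator_of_mem ((hRT ω y).2 hy), Set.indicator_of_mem hy, hψR]
    · rw [Set.indicator_of_notMem (mt (hRT ω y).1 hy), Set.indicator_of_notMem hy]
  rw [← lintegral_indicator hT, ← lintegral_lintegral_resample hR (hψ.indicator hT)]
  simp_rw [hsection, lintegral_indicator_const hI, lintegral_mul_const _ hψ, mul_comm]

theorem measure_mul_lintegral_le_setLIntegral_of_resample [IsProbabilityMeasure ρ]
    (hR : MeasurePreserving (fun p : Ω × β => R p.1 p.2) (ν.prod ρ) ν)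
    (hRR : ∀ ω y y', R (R ω y) y' = R ω y')
    {T : Set Ω} (hT : MeasurableSet T) {I : Set β} (hI : MeasurableSet I)
    (hRT : ∀ ω y, R ω y ∈ T ↔ y ∈ I) {f g : Ω → ℝ≥0∞}
    (hgf : ∀ᵐ ω ∂ν, ω ∈ T → ∀ᵐ y ∂ρ, g (R ω y) ≤ f ω) :
    ρ I * ∫⁻ ω, g ω ∂ν ≤ ∫⁻ ω in T, f ω ∂ν := by
  obtain ⟨φ, hφ, hφg, hφeq⟩ := exists_measurable_le_lintegral_eq ν g
  have hψ : Measurable fun ω => ∫⁻ y, φ (R ω y) ∂ρ :=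
    (hφ.comp hR.measurable).lintegral_prod_right'
  calc ρ I * ∫⁻ ω, g ω ∂ν = ρ I * ∫⁻ ω, ∫⁻ y, φ (R ω y) ∂ρ ∂ν := by
        rw [hφeq, lintegral_lintegral_resample hR hφ]
    _ = ∫⁻ ω in T, ∫⁻ y, φ (R ω y) ∂ρ ∂ν :=
        measure_mul_lintegral_eq_setLIntegral_of_resample hR hT hI hRT hψ
          fun ω y => by simp only [hRR]
    _ ≤ ∫⁻ ω in T, f ω ∂ν := by
        refine setLIntegral_mono_ae' hT ?_
        filter_upwards [hgf] with ω hω hωT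
        calc ∫⁻ y, φ (R ω y) ∂ρ ≤ ∫⁻ _, f ω ∂ρ :=
              lintegral_mono_ae ((hω hωT).mono fun y hy => (hφg _).trans hy)
          _ = f ω := by simp

end Resampling

section Coupling

variable {V : Type*} [DecidableEq V]

theorem updateCoupling_apply_edge (J : V → V → ℝ) (u v : V) (y : ℝ) :
    updateCoupling J u v y u v = y :=
  if_pos rfl

theorem updateCoupling_apply_edge_swap (J : V → V → ℝ) (u v : V) (y : ℝ) :
    updateCoupling J u v y v u = y :=
  if_pos Sym2.eq_swap

theorem updateCoupling_idem (J : V → V → ℝ) (u v : V) (y y' : ℝ) :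
    updateCoupling (updateCoupling J u v y) u v y' = updateCoupling J u v y' := by
  funext x z
  unfold updateCoupling
  split_ifs <;> rfl

theorem updateCoupling_eq_self {J : V → V → ℝ} {u v : V} (h : J u v = J v u) :
    updateCoupling J u v (J u v) = J := by
  funext x z
  unfold updateCoupling
  split_ifs with hxz
  · rcases Sym2.eq_iff.mp hxz with ⟨rfl, rfl⟩ | ⟨rfl, rfl⟩
    · rfl
    · exact h
  · rfl

theorem ae_symm_of_measurePreserving_updateCoupling {ν : Measure (V → V → ℝ)}
    {ρ : Measure ℝ} {u v : V}
    (h : MeasurePreserving (fun p : (V → V → ℝ) × ℝ => updateCoupling p.1 u v p.2)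
      (ν.prod ρ) ν) :
    ∀ᵐ J ∂ν, J u v = J v u := by
  have hmeas : MeasurableSet {J : V → V → ℝ | J u v = J v u} :=
    measurableSet_eq_fun (by fun_prop) (by fun_prop)
  rw [← h.map_eq, ae_map_iff h.measurable.aemeasurable hmeas]
  exact ae_of_all _ fun p => by
    rw [updateCoupling_apply_edge, updateCoupling_apply_edge_swap]

theorem setOf_updateCoupling_mem_subset {A : Set ((V → V → ℝ) × (V → Bool))} {u v : V} {c : ℝ}
    (hA : ∀ p ∈ A, c ≤ p.1 u v → ∀ y : ℝ, c ≤ y → (updateCoupling p.1 u v y, p.2) ∈ A)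
    {J : V → V → ℝ} (hJsym : J u v = J v u) (hJ : c ≤ J u v) {y : ℝ} (hy : c ≤ y) :
    {σ | (updateCoupling J u v y, σ) ∈ A} ⊆ {σ | (J, σ) ∈ A} := by
  intro σ hσ
  show (J, σ) ∈ A
  simpa only [updateCoupling_idem, updateCoupling_eq_self hJsym] using
    hA _ hσ (hy.trans_eq (updateCoupling_apply_edge J u v y).symm) (J u v) hJ

theorem uniformGS_mono_of_ncard_eq (G : SimpleGraph V) [G.LocallyFinite]
    {J J' : V → V → ℝ} {s s' : Set (V → Bool)}
    (hcard : {σ | IsGroundState G J' σ}.ncard = {σ | IsGroundState G J σ}.ncard)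
    (hs : s ⊆ {σ | IsGroundState G J σ}) (hs' : s' ⊆ s) :
    uniformGS G J' s' ≤ uniformGS G J s := by
  simp only [uniformGS, Measure.smul_apply, smul_eq_mul, hcard,
    Measure.restrict_eq_self _ hs]
  exact mul_le_mul_right ((Measure.restrict_apply_le _ _).trans (measure_mono hs')) _

end Coupling

theorem coupling_backmodify_estimate_general {V : Type*} [DecidableEq V] (G : SimpleGraph V)
    [G.LocallyFinite] (u v : V)
    (ν : Measure (V → V → ℝ))
    (νe : Measure ℝ) [IsProbabilityMeasure νe]
    (hprod : MeasurePreserving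
      (fun p : (V → V → ℝ) × ℝ => updateCoupling p.1 u v p.2) (ν.prod νe) ν)
    (N : ℕ)
    (hcard : ∀ᵐ J ∂ν, {σ : V → Bool | IsGroundState G J σ}.Finite ∧
      {σ : V → Bool | IsGroundState G J σ}.ncard = N)
    (c d : ℝ)
    (A : Set ((V → V → ℝ) × (V → Bool)))
    (hAgs : ∀ p ∈ A, IsGroundState G p.1 p.2 ∧ spin (p.2 u) * spin (p.2 v) = 1)
    (hAstable : ∀ p ∈ A, c ≤ p.1 u v → ∀ y : ℝ, c ≤ y → (updateCoupling p.1 u v y, p.2) ∈ A) :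
    νe (Set.Icc c d) * (∫⁻ J in {J : V → V → ℝ | c ≤ J u v},
        uniformGS G J {σ | (J, σ) ∈ A} ∂ν) ≤
      ∫⁻ J in {J : V → V → ℝ | J u v ∈ Set.Icc c d},
        uniformGS G J {σ | (J, σ) ∈ A} ∂ν := by
  have hN : ∀ᵐ J ∂ν, {σ : V → Bool | IsGroundState G J σ}.ncard = N := hcard.mono fun _ h => h.2
  have hNy := Measure.ae_ae_of_ae_prod (hprod.quasiMeasurePreserving.ae hN)
  rw [← lintegral_indicator (measurableSet_le measurable_const (by fun_prop))]
  refine measure_mul_lintegral_le_setLIntegral_of_resample (R := (updateCoupling · u v ·)) hprod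
    (updateCoupling_idem · u v) (measurableSet_Icc.preimage (by fun_prop)) measurableSet_Icc
    (fun J y => by simp [updateCoupling_apply_edge]) ?_
  filter_upwards [ae_symm_of_measurePreserving_updateCoupling hprod, hN, hNy]
    with J hJsym hJN hJyN hJ
  filter_upwards [hJyN] with y hyN
  by_cases hy : c ≤ y
  · rw [Set.indicator_of_mem (by simpa [updateCoupling_apply_edge])]
    exact uniformGS_mono_of_ncard_eq G (hyN.trans hJN.symm) (fun σ hσ => (hAgs _ hσ).1)
      (setOf_updateCoupling_mem_subset hAstable hJsym hJ.1 hy)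
  · rw [Set.indicator_of_notMem (by simpa [updateCoupling_apply_edge] using hy)]
    exact zero_le

/-- Lemma on bringing a coupling back towards its critical value: with `μ_J` the uniform
measure on the finite set `𝒢(J)` (of `ν`-a.s. constant cardinality `N`), if
`A ⊆ {(J,σ) : σ ∈ 𝒢(J), σ_e = +1}` is stable under replacing the coupling at `e` by any
value `≥ c` whenever `J_e ≥ c`, then `M(A ∩ {J_e ∈ [c,d]}) ≥ ν_e([c,d]) M(A ∩ {J_e ≥ c})`. -/
theorem coupling_backmodify_estimate {V : Type*} [DecidableEq V] (G : SimpleGraph V)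
    [G.LocallyFinite] (u v : V) (huv : G.Adj u v)
    (ν : Measure (V → V → ℝ)) [IsProbabilityMeasure ν]
    (νe : Measure ℝ) [IsProbabilityMeasure νe]
    (hprod : MeasurePreserving
      (fun p : (V → V → ℝ) × ℝ => updateCoupling p.1 u v p.2) (ν.prod νe) ν)
    (N : ℕ) (hN : 0 < N)
    (hcard : ∀ᵐ J ∂ν, {σ : V → Bool | IsGroundState G J σ}.Finite ∧
      {σ : V → Bool | IsGroundState G J σ}.ncard = N)
    (c d : ℝ) (hcd : c < d)
    (A : Set ((V → V → ℝ) × (V → Bool))) (hA : MeasurableSet A)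
    (hAgs : ∀ p ∈ A, IsGroundState G p.1 p.2 ∧ spin (p.2 u) * spin (p.2 v) = 1)
    (hAstable : ∀ p ∈ A, c ≤ p.1 u v → ∀ y : ℝ, c ≤ y → (updateCoupling p.1 u v y, p.2) ∈ A) :
    νe (Set.Icc c d) * (∫⁻ J in {J : V → V → ℝ | c ≤ J u v},
        uniformGS G J {σ | (J, σ) ∈ A} ∂ν) ≤
      ∫⁻ J in {J : V → V → ℝ | J u v ∈ Set.Icc c d},
        uniformGS G J {σ | (J, σ) ∈ A} ∂ν :=
  coupling_backmodify_estimate_general G u v ν νe hprod N hcard c d A hAgs hAstable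
end
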